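/- arXiv:1609.08447 — 3 statements merged into one kernel-verified Lean document; each statement's English description precedes it below -/
import Mathlib

section
/- Let λ > 1 and let f : [0,T] → [0,∞) be differentiable with f'(t) + c₁ f(t)^λ ≤ c₂ for all t ∈ [0,T], where c₁, c₂ > 0. Then for every t ∈ (0,T], f(t) ≤ max( f(0) / (1 + t f(0)^{λ-1} (λ-1) c₁/2)^{1/(λ-1)}, (2c₂/c₁)^{1/λ} ). -/
open Real Set

/-!
Let `M = (2c₂/c₁)^(1/λ)`, so that `c₁ M^λ = 2c₂`. Wherever `f ≥ M` the hypothesis gives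
`f' ≤ -(c₁/2) f^λ`, in particular `f' < 0` at the level `M`; so once `f` drops to `M` it stays
below it. If `f t > M`, then `f > M` on all of `[0, t]`, and there the Bernoulli substitution
`g = f^(1-λ)` turns the inequality into `g' ≥ (λ-1) c₁/2`, which integrates to the first bound.
-/

theorem lt_of_lt_right_of_hasDerivAt_neg_of_eq {f f' : ℝ → ℝ} {a b M : ℝ}
    (hderiv : ∀ s ∈ Icc a b, HasDerivAt f (f' s) s)
    (hlevel : ∀ s ∈ Icc a b, f s = M → f' s < 0) (hb : M < f b) :
    ∀ s ∈ Icc a b, M < f s := by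
  intro s hs
  by_contra! hs_le
  have hsub : Icc s b ⊆ Icc a b := Icc_subset_Icc_left hs.1
  have hfb : f b ≤ M :=
    image_le_of_deriv_right_lt_deriv_boundary' (B := fun _ => M) (B' := fun _ => 0)
      (fun x hx => (hderiv x (hsub hx)).continuousAt.continuousWithinAt)
      (fun x hx => (hderiv x (hsub (Ico_subset_Icc_self hx))).hasDerivWithinAt)
      hs_le continuousOn_const (fun _ _ => hasDerivWithinAt_const _ _ _)
      (fun x hx => hlevel x (hsub (Ico_subset_Icc_self hx))) (right_mem_Icc.2 hs.2)
  exact hfb.not_gt hb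

theorem rpow_one_sub_add_le_of_hasDerivAt_le_neg_mul_rpow {f f' : ℝ → ℝ} {a b p k : ℝ}
    (hp : 1 ≤ p) (hab : a ≤ b) (hpos : ∀ s ∈ Icc a b, 0 < f s)
    (hderiv : ∀ s ∈ Icc a b, HasDerivAt f (f' s) s)
    (hbound : ∀ s ∈ Icc a b, f' s ≤ -k * f s ^ p) :
    f a ^ (1 - p) + (p - 1) * k * (b - a) ≤ f b ^ (1 - p) := by
  have hg : ∀ s ∈ Icc a b,
      HasDerivAt (fun x => f x ^ (1 - p)) (f' s * (1 - p) * f s ^ (1 - p - 1)) s :=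
    fun s hs => (hderiv s hs).rpow_const (Or.inl (hpos s hs).ne')
  have hg' : ∀ s ∈ Icc a b, (p - 1) * k ≤ f' s * (1 - p) * f s ^ (1 - p - 1) := by
    intro s hs
    have hfs := hpos s hs
    calc (p - 1) * k = -k * f s ^ p * ((1 - p) * f s ^ (-p)) := by
          rw [rpow_neg hfs.le]; field_simp; ring
      _ ≤ f' s * ((1 - p) * f s ^ (-p)) :=
          mul_le_mul_of_nonpos_right (hbound s hs)
            (mul_nonpos_of_nonpos_of_nonneg (by linarith) (by positivity))
      _ = f' s * (1 - p) * f s ^ (1 - p - 1) := by rw [show 1 - p - 1 = -p by ring]; ring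
  have key := (convex_Icc a b).mul_sub_le_image_sub_of_le_deriv
    (fun s hs => (hg s hs).continuousAt.continuousWithinAt)
    (fun s hs => (hg s (interior_subset hs)).differentiableAt.differentiableWithinAt)
    (fun s hs => (hg s (interior_subset hs)).deriv ▸ hg' s (interior_subset hs))
    a (left_mem_Icc.2 hab) b (right_mem_Icc.2 hab) hab
  linarith

theorem le_div_rpow_of_rpow_one_sub_add_le {x y u p : ℝ} (hx : 0 < x) (hy : 0 < y)
    (hu : 0 ≤ u) (hp : 1 < p) (h : y ^ (1 - p) + u ≤ x ^ (1 - p)) :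
    x ≤ y / (1 + u * y ^ (p - 1)) ^ (1 / (p - 1)) := by
  set B := 1 + u * y ^ (p - 1)
  have hB : 0 < B := by positivity
  have hpow : (y / B ^ (1 / (p - 1))) ^ (1 - p) = y ^ (1 - p) + u := by
    rw [div_rpow hy.le (by positivity), ← rpow_mul hB.le,
      show 1 / (p - 1) * (1 - p) = -1 by field_simp [(by linarith : p - 1 ≠ 0)]; ring, rpow_neg_one, div_inv_eq_mul,
      mul_add, mul_one, ← mul_assoc, mul_comm _ u, mul_assoc, ← rpow_add hy]
    simp
  rw [← rpow_le_rpow_iff_of_neg (by positivity) hx (by linarith : 1 - p < 0), hpow]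
  exact h

theorem stmt_0_general (T lam c₁ c₂ : ℝ) (hlam : 1 < lam)
    (hc₁ : 0 < c₁) (hc₂ : 0 < c₂)
    (f f' : ℝ → ℝ)
    (hderiv : ∀ t ∈ Icc (0:ℝ) T, HasDerivAt f (f' t) t)
    (hineq : ∀ t ∈ Icc (0:ℝ) T, f' t + c₁ * (f t) ^ lam ≤ c₂) :
    ∀ t ∈ Ioc (0:ℝ) T,
      f t ≤ max (f 0 / (1 + t * (f 0) ^ (lam - 1) * (lam - 1) * (c₁ / 2)) ^ (1 / (lam - 1)))
              ((2 * c₂ / c₁) ^ (1 / lam)) := by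
  rintro t ⟨ht0, htT⟩
  set M := (2 * c₂ / c₁) ^ (1 / lam)
  rcases le_or_gt (f t) M with hle | hMt
  · exact le_max_of_le_right hle
  have hM : 0 < M := by positivity
  have hMpow : c₁ * M ^ lam = 2 * c₂ := by
    rw [← rpow_mul (by positivity), one_div_mul_cancel (by linarith), rpow_one]
    field_simp
  have hsub : Icc 0 t ⊆ Icc 0 T := Icc_subset_Icc_right htT
  have hdecay : ∀ s ∈ Icc 0 t, M ≤ f s → f' s ≤ -(c₁ / 2) * f s ^ lam := by
    intro s hs hMs
    have := rpow_le_rpow hM.le hMs (by linarith : 0 ≤ lam)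
    nlinarith [hineq s (hsub hs)]
  have habove : ∀ s ∈ Icc 0 t, M < f s :=
    lt_of_lt_right_of_hasDerivAt_neg_of_eq (fun s hs => hderiv s (hsub hs))
      (fun s hs hfs => by linarith [hfs ▸ hdecay s hs hfs.ge]) hMt
  have hbernoulli := rpow_one_sub_add_le_of_hasDerivAt_le_neg_mul_rpow hlam.le ht0.le
    (fun s hs => hM.trans (habove s hs)) (fun s hs => hderiv s (hsub hs))
    (fun s hs => hdecay s hs (habove s hs).le)
  rw [sub_zero] at hbernoulli
  have hbound := le_div_rpow_of_rpow_one_sub_add_le (hM.trans hMt)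
    (hM.trans (habove 0 (left_mem_Icc.2 ht0.le))) (by have := sub_pos.2 hlam; positivity) hlam hbernoulli
  refine le_max_of_le_left (hbound.trans_eq ?_)
  ring_nf

/-- Comparison lemma: if `f' + c₁ f^λ ≤ c₂` on `[0,T]` then
`f t ≤ max (f 0 / (1 + t f(0)^(λ-1) (λ-1) c₁/2)^(1/(λ-1))) ((2c₂/c₁)^(1/λ))`. -/
theorem stmt_0 (T lam c₁ c₂ : ℝ) (hT : 0 < T) (hlam : 1 < lam)
    (hc₁ : 0 < c₁) (hc₂ : 0 < c₂)
    (f f' : ℝ → ℝ)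
    (hnonneg : ∀ t ∈ Icc (0:ℝ) T, 0 ≤ f t)
    (hderiv : ∀ t ∈ Icc (0:ℝ) T, HasDerivAt f (f' t) t)
    (hineq : ∀ t ∈ Icc (0:ℝ) T, f' t + c₁ * (f t) ^ lam ≤ c₂) :
    ∀ t ∈ Ioc (0:ℝ) T,
      f t ≤ max (f 0 / (1 + t * (f 0) ^ (lam - 1) * (lam - 1) * (c₁ / 2)) ^ (1 / (lam - 1)))
              ((2 * c₂ / c₁) ^ (1 / lam)) :=
  stmt_0_general T lam c₁ c₂ hlam hc₁ hc₂ f f' hderiv hineq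
end

section
/- Let λ > 1 and let f : [0,T] → [0,∞) be differentiable with f'(t) + c₁ f(t)^λ ≤ c₂ for all t ∈ [0,T], where c₁, c₂ > 0. Then for every t ∈ (0,T], f(t) ≤ max( t^{-1/(λ-1)} ((λ-1) c₁/2)^{-1/(λ-1)}, (2c₂/c₁)^{1/λ} ). In particular the bound at time t is independent of the initial value f(0). -/
open Real Set

/-- Comparison lemma, initial-datum independent form: if `f' + c₁ f^λ ≤ c₂` on `[0,T]` then
`f t ≤ max (t^(-1/(λ-1)) ((λ-1)c₁/2)^(-1/(λ-1))) ((2c₂/c₁)^(1/λ))`. -/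
theorem stmt_1 (T lam c₁ c₂ : ℝ) (hT : 0 < T) (hlam : 1 < lam)
    (hc₁ : 0 < c₁) (hc₂ : 0 < c₂)
    (f f' : ℝ → ℝ)
    (hnonneg : ∀ t ∈ Icc (0:ℝ) T, 0 ≤ f t)
    (hderiv : ∀ t ∈ Icc (0:ℝ) T, HasDerivAt f (f' t) t)
    (hineq : ∀ t ∈ Icc (0:ℝ) T, f' t + c₁ * (f t) ^ lam ≤ c₂) :
    ∀ t ∈ Ioc (0:ℝ) T,
      f t ≤ max (t ^ (-(1 / (lam - 1))) * ((lam - 1) * c₁ / 2) ^ (-(1 / (lam - 1))))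
              ((2 * c₂ / c₁) ^ (1 / lam)) := by
  intro t₀ ht₀
  obtain ⟨ht₀0, ht₀T⟩ := ht₀
  by_contra hcon
  push_neg at hcon
  set B : ℝ := (2 * c₂ / c₁) ^ (1 / lam) with hBdef
  have hlam0 : (0:ℝ) < lam := lt_trans one_pos hlam
  have hBpos : 0 < B := Real.rpow_pos_of_pos (by positivity) _
  have hBlam : B ^ lam = 2 * c₂ / c₁ := by
    rw [hBdef, ← Real.rpow_mul (by positivity), one_div_mul_cancel (ne_of_gt hlam0),
      Real.rpow_one]
  have hfB : B < f t₀ := lt_of_le_of_lt (le_max_right _ _) hcon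
  have hsub : Icc (0:ℝ) t₀ ⊆ Icc (0:ℝ) T := Icc_subset_Icc le_rfl ht₀T
  -- derivative bound where f s > B
  have hkey : ∀ s ∈ Icc (0:ℝ) T, B ≤ f s → f' s ≤ -(c₁ / 2) * (f s) ^ lam := by
    intro s hs hBs
    have h1 : f' s ≤ c₂ - c₁ * (f s) ^ lam := by linarith [hineq s hs]
    have h2 : B ^ lam ≤ (f s) ^ lam :=
      Real.rpow_le_rpow (le_of_lt hBpos) hBs (le_of_lt hlam0)
    rw [hBlam] at h2
    have : 2 * c₂ ≤ c₁ * (f s) ^ lam := by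
      rw [div_le_iff₀ hc₁] at h2; linarith
    nlinarith
  by_cases hall : ∀ s ∈ Icc (0:ℝ) t₀, B < f s
  · -- f > B on [0, t₀]: use g = f^(1-lam) - K t monotone
    set K : ℝ := (lam - 1) * c₁ / 2 with hKdef
    have hKpos : 0 < K := by
      have : 0 < lam - 1 := by linarith
      positivity
    set g : ℝ → ℝ := fun s => (f s) ^ (1 - lam) - K * s with hgdef
    have hg : ∀ s ∈ Icc (0:ℝ) t₀,
        HasDerivAt g (f' s * (1 - lam) * (f s) ^ (1 - lam - 1) - K) s := by
      intro s hs
      exact ((hderiv s (hsub hs)).rpow_const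
        (Or.inl (ne_of_gt (lt_trans hBpos (hall s hs))))).sub
        ((hasDerivAt_id s).const_mul K |>.congr_deriv (by ring))
    have hgpos : ∀ s ∈ Icc (0:ℝ) t₀,
        0 ≤ f' s * (1 - lam) * (f s) ^ (1 - lam - 1) - K := by
      intro s hs
      have hfs : B < f s := hall s hs
      have hfpos : 0 < f s := lt_trans hBpos hfs
      have hd : f' s ≤ -(c₁ / 2) * (f s) ^ lam :=
        hkey s (hsub hs) (le_of_lt hfs)
      have hpow : (f s) ^ lam * (f s) ^ (1 - lam - 1) = 1 := by
        rw [← Real.rpow_add hfpos]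
        norm_num
      have hppos : 0 < (f s) ^ (1 - lam - 1) := Real.rpow_pos_of_pos hfpos _
      have h1 : -(f' s) * (f s) ^ (1 - lam - 1) ≥
          (c₁ / 2) * ((f s) ^ lam * (f s) ^ (1 - lam - 1)) := by
        nlinarith [mul_le_mul_of_nonneg_right hd (le_of_lt hppos)]
      rw [hpow] at h1
      have hK' : K ≤ (lam - 1) * (-(f' s) * (f s) ^ (1 - lam - 1)) := by
        rw [hKdef]
        nlinarith [h1]
      nlinarith [hK']
    have hmono : MonotoneOn g (Icc (0:ℝ) t₀) := by
      apply monotoneOn_of_deriv_nonneg (convex_Icc _ _)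
        (fun s hs => ((hg s hs).continuousAt.continuousWithinAt))
      · intro s hs
        rw [interior_Icc] at hs
        exact ((hg s (Ioo_subset_Icc_self hs)).differentiableAt).differentiableWithinAt
      · intro s hs
        rw [interior_Icc] at hs
        rw [(hg s (Ioo_subset_Icc_self hs)).deriv]
        exact hgpos s (Ioo_subset_Icc_self hs)
    have h0mem : (0:ℝ) ∈ Icc (0:ℝ) t₀ := ⟨le_rfl, le_of_lt ht₀0⟩
    have ht₀mem : t₀ ∈ Icc (0:ℝ) t₀ := ⟨le_of_lt ht₀0, le_rfl⟩
    have hg0 : g 0 ≤ g t₀ := hmono h0mem ht₀mem (le_of_lt ht₀0)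
    have hf0 : 0 ≤ (f 0) ^ (1 - lam) :=
      Real.rpow_nonneg (hnonneg 0 (hsub h0mem)) _
    have hKt : K * t₀ ≤ (f t₀) ^ (1 - lam) := by
      simp only [hgdef, mul_zero, sub_zero] at hg0
      linarith
    have hKtpos : 0 < K * t₀ := mul_pos hKpos ht₀0
    have hexp : (1:ℝ) / (1 - lam) ≤ 0 := by
      apply div_nonpos_of_nonneg_of_nonpos zero_le_one
      linarith
    have h3 : ((f t₀) ^ (1 - lam)) ^ ((1:ℝ) / (1 - lam)) ≤ (K * t₀) ^ ((1:ℝ) / (1 - lam)) :=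
      Real.rpow_le_rpow_of_nonpos hKtpos hKt hexp
    have hft₀pos : 0 < f t₀ := lt_trans hBpos hfB
    have hl : ((f t₀) ^ (1 - lam)) ^ ((1:ℝ) / (1 - lam)) = f t₀ := by
      rw [← Real.rpow_mul (le_of_lt hft₀pos), mul_one_div,
        div_self (by intro h; rw [sub_eq_zero] at h; linarith), Real.rpow_one]
    have hr : (K * t₀) ^ ((1:ℝ) / (1 - lam)) =
        t₀ ^ (-(1 / (lam - 1))) * K ^ (-(1 / (lam - 1))) := by
      have hpe : (1:ℝ) / (1 - lam) = -(1 / (lam - 1)) := by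
        rw [one_div, one_div, ← inv_neg, neg_sub]
      rw [Real.mul_rpow (le_of_lt hKpos) (le_of_lt ht₀0), mul_comm, hpe]
    rw [hl, hr] at h3
    exact absurd (le_trans h3 (le_max_left _ _)) (not_le.mpr hcon)
  · -- f hits B: take the last time it's ≤ B
    push_neg at hall
    set S : Set ℝ := Icc (0:ℝ) t₀ ∩ f ⁻¹' (Iic B) with hSdef
    have hScont : ContinuousOn f (Icc (0:ℝ) t₀) := fun s hs =>
      ((hderiv s (hsub hs)).continuousAt).continuousWithinAt
    have hSclosed : IsClosed S :=
      hScont.preimage_isClosed_of_isClosed isClosed_Icc isClosed_Iic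
    have hScomp : IsCompact S :=
      isCompact_Icc.of_isClosed_subset hSclosed inter_subset_left
    have hSne : S.Nonempty := by
      obtain ⟨s, hs, hsB⟩ := hall
      exact ⟨s, hs, hsB⟩
    obtain ⟨σ, hσS, hσgr⟩ := hScomp.exists_isGreatest hSne
    obtain ⟨hσmem, hσB⟩ := hσS
    have hσlt : σ < t₀ := lt_of_le_of_ne hσmem.2 (by
      intro h; rw [h] at hσB; exact absurd hσB (not_le.mpr hfB))
    have hanti : StrictAntiOn f (Icc σ t₀) := by
      apply strictAntiOn_of_deriv_neg (convex_Icc _ _)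
        (hScont.mono (Icc_subset_Icc hσmem.1 le_rfl))
      intro s hs
      rw [interior_Icc] at hs
      have hsIcc : s ∈ Icc (0:ℝ) t₀ := ⟨le_trans hσmem.1 (le_of_lt hs.1), le_of_lt hs.2⟩
      have hsB : B < f s := by
        by_contra h
        push_neg at h
        exact absurd (hσgr ⟨hsIcc, h⟩) (not_le.mpr hs.1)
      rw [(hderiv s (hsub hsIcc)).deriv]
      have := hkey s (hsub hsIcc) (le_of_lt hsB)
      have : -(c₁/2) * (f s) ^ lam < 0 := by
        have : 0 < (f s) ^ lam := Real.rpow_pos_of_pos (lt_trans hBpos hsB) _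
        nlinarith
      linarith [hkey s (hsub hsIcc) (le_of_lt hsB)]
    have : f t₀ < f σ :=
      hanti ⟨le_rfl, le_of_lt hσlt⟩ ⟨le_of_lt hσlt, le_rfl⟩ hσlt
    exact absurd (lt_trans hfB (lt_of_lt_of_le this hσB)) (lt_irrefl _)
end

section
/- Let C_m ≤ C(m+1) for all m and let f_m be as above. Then for every α ∈ (0,1) and every k ∈ {1,2,3}, the Hermite polynomial H_k(f_m, C_m) tends to 0 in the Besov space 𝒞^{-α} = B^{-α}_{∞,∞}(𝕋²) as m → ∞; more precisely ‖f_m‖_{𝒞^{-α}} ≲ C_m^{1/2} 2^{-αm}, ‖f_m² − C_m‖_{𝒞^{-α}} ≲ C_m 2^{-αm}, and ‖f_m³ − 3C_m f_m‖_{𝒞^{-α}} ≲ C_m^{3/2} 2^{-αm}. -/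
open Real Complex MeasureTheory Filter

/-- Fourier coefficient of a function on the 2-torus (identified with `[0,1]²`). -/
noncomputable def torusFourierCoeff (f : ℝ × ℝ → ℂ) (l : ℤ × ℤ) : ℂ :=
  ∫ z in Set.Icc (0:ℝ) 1 ×ˢ Set.Icc (0:ℝ) 1,
    f z * Complex.exp (-(2 * π * Complex.I * ((l.1 : ℂ) * z.1 + (l.2 : ℂ) * z.2)))

/-- Dyadic annuli in frequency space: index `0` plays the role of `κ = -1`
(frequencies of modulus `< 1`), index `κ+1` the annulus `2^κ ≤ |l| < 2^{κ+1}`. -/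
def dyadicAnnulus : ℕ → Set (ℤ × ℤ)
  | 0 => {l | Real.sqrt ((l.1 : ℝ) ^ 2 + (l.2 : ℝ) ^ 2) < 1}
  | (κ + 1) => {l | (2 : ℝ) ^ κ ≤ Real.sqrt ((l.1 : ℝ) ^ 2 + (l.2 : ℝ) ^ 2) ∧
      Real.sqrt ((l.1 : ℝ) ^ 2 + (l.2 : ℝ) ^ 2) < 2 ^ (κ + 1)}

/-- Littlewood–Paley block `δ_κ f`. -/
noncomputable def lpBlock (κ : ℕ) (f : ℝ × ℝ → ℂ) (z : ℝ × ℝ) : ℂ :=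
  ∑' l : ℤ × ℤ, (dyadicAnnulus κ).indicator
    (fun l => torusFourierCoeff f l *
      Complex.exp (2 * π * Complex.I * ((l.1 : ℂ) * z.1 + (l.2 : ℂ) * z.2))) l

/-- The Besov `𝒞^{-α} = B^{-α}_{∞,∞}` norm (index shift: `κ : ℕ` stands for `κ - 1 ≥ -1`). -/
noncomputable def besovNegNorm (α : ℝ) (f : ℝ × ℝ → ℂ) : ℝ :=
  ⨆ κ : ℕ, (2 : ℝ) ^ (-α * ((κ : ℝ) - 1)) * ⨆ z : ℝ × ℝ, ‖lpBlock κ f z‖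

/-! The functions `f_m` and their Hermite polynomials `H_k(f_m, C_m)`, `k ≤ 3`, are trigonometric
polynomials whose frequencies are `j • 2^m (1,1)` with `1 ≤ |j| ≤ 3`, hence of modulus at least
`2^m`. Every Littlewood–Paley block `δ_κ` with `κ ≤ m` therefore kills them, and every other block
is bounded by the `ℓ¹` norm of the coefficients, which is `≲ C_m^{k/2}`; the weight `2^{-α(κ-1)}`
of those blocks is at most `2^{-αm}`. As `C_m` grows at most linearly, `C_m^{k/2} 2^{-αm} → 0`. -/

noncomputable def torusChar (l : ℤ × ℤ) (z : ℝ × ℝ) : ℂ :=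
  exp (2 * π * I * ((l.1 : ℂ) * z.1 + (l.2 : ℂ) * z.2))

lemma norm_torusChar (l : ℤ × ℤ) (z : ℝ × ℝ) : ‖torusChar l z‖ = 1 := by
  rw [torusChar, show 2 * (π : ℂ) * I * ((l.1 : ℂ) * z.1 + (l.2 : ℂ) * z.2)
      = ((2 * π * (l.1 * z.1 + l.2 * z.2) : ℝ) : ℂ) * I by push_cast; ring,
    norm_exp_ofReal_mul_I]

lemma torusChar_zsmul (k : ℤ) (l : ℤ × ℤ) (z : ℝ × ℝ) :
    torusChar (k • l) z = torusChar l z ^ k := by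
  rw [torusChar, torusChar, ← exp_int_mul]
  congr 1
  simp only [Prod.smul_fst, Prod.smul_snd, smul_eq_mul]
  push_cast
  ring

lemma torusChar_diag (m : ℕ) (z : ℝ × ℝ) :
    torusChar ((2 : ℤ) ^ m, (2 : ℤ) ^ m) z
      = exp (2 * π * I * ((2 : ℂ) ^ m * z.1 + (2 : ℂ) ^ m * z.2)) := by
  rw [torusChar]; push_cast; rfl

lemma setIntegral_Icc_exp_two_pi_I_int_mul (n : ℤ) :
    ∫ x in Set.Icc (0:ℝ) 1, exp (2 * π * I * n * x) = if n = 0 then 1 else 0 := by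
  rw [integral_Icc_eq_integral_Ioc, ← intervalIntegral.integral_of_le zero_le_one]
  split_ifs with hn
  · simp [hn]
  · have hc : 2 * π * I * n ≠ 0 := by simp [Real.pi_ne_zero, I_ne_zero, hn]
    have h1 : exp (2 * π * I * n) = 1 := by
      rw [← exp_int_mul_two_pi_mul_I n]; ring_nf
    rw [integral_exp_mul_complex hc, ofReal_one, ofReal_zero, mul_one, h1, mul_zero,
      Complex.exp_zero, sub_self, zero_div]

lemma torusFourierCoeff_torusChar (l l' : ℤ × ℤ) :
    torusFourierCoeff (torusChar l) l' = if l' = l then 1 else 0 := by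
  have hsplit : ∀ z : ℝ × ℝ,
      torusChar l z * exp (-(2 * π * I * ((l'.1 : ℂ) * z.1 + (l'.2 : ℂ) * z.2)))
        = exp (2 * π * I * ((l.1 - l'.1 : ℤ) : ℂ) * z.1)
          * exp (2 * π * I * ((l.2 - l'.2 : ℤ) : ℂ) * z.2) := by
    intro z
    rw [torusChar, ← Complex.exp_add, ← Complex.exp_add]
    congr 1; push_cast; ring
  simp_rw [torusFourierCoeff, hsplit]
  rw [Measure.volume_eq_prod, setIntegral_prod_mul
      (fun x : ℝ => exp (2 * π * I * ((l.1 - l'.1 : ℤ) : ℂ) * x))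
      (fun y : ℝ => exp (2 * π * I * ((l.2 - l'.2 : ℤ) : ℂ) * y)),
    setIntegral_Icc_exp_two_pi_I_int_mul, setIntegral_Icc_exp_two_pi_I_int_mul]
  simp only [sub_eq_zero, Prod.ext_iff, eq_comm (a := l'), ite_zero_mul_ite_zero, mul_one]

lemma sq_add_sq_lt_of_mem_dyadicAnnulus {κ : ℕ} {l : ℤ × ℤ} (h : l ∈ dyadicAnnulus κ) :
    l.1 ^ 2 + l.2 ^ 2 < 4 ^ κ := by
  have key : ∀ n : ℕ, √((l.1 : ℝ) ^ 2 + (l.2 : ℝ) ^ 2) < 2 ^ n → l.1 ^ 2 + l.2 ^ 2 < 4 ^ n := by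
    intro n hn
    rw [Real.sqrt_lt' (by positivity), ← pow_mul, mul_comm, pow_mul] at hn
    norm_num at hn
    exact_mod_cast hn
  cases κ with
  | zero => exact key 0 (h.trans_eq (pow_zero 2).symm)
  | succ j => exact key (j + 1) h.2

lemma besovNegNorm_nonneg (α : ℝ) (f : ℝ × ℝ → ℂ) : 0 ≤ besovNegNorm α f :=
  Real.iSup_nonneg fun _ => mul_nonneg (by positivity) (Real.iSup_nonneg fun _ => norm_nonneg _)

section TrigPoly

variable {ι : Type*} [Fintype ι] (w : ι → ℂ) (l : ι → ℤ × ℤ)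

lemma torusFourierCoeff_sum (l' : ℤ × ℤ) :
    torusFourierCoeff (fun z => ∑ i, w i * torusChar (l i) z) l'
      = ∑ i, if l' = l i then w i else 0 := by
  have hint : ∀ i, IntegrableOn
      (fun z => w i * torusChar (l i) z *
        exp (-(2 * π * I * ((l'.1 : ℂ) * z.1 + (l'.2 : ℂ) * z.2))))
      (Set.Icc (0:ℝ) 1 ×ˢ Set.Icc (0:ℝ) 1) := fun i =>
    ContinuousOn.integrableOn_compact (isCompact_Icc.prod isCompact_Icc)
      (by unfold torusChar; fun_prop)
  simp_rw [torusFourierCoeff, Finset.sum_mul]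
  rw [integral_finsetSum _ fun i _ => hint i]
  refine Finset.sum_congr rfl fun i _ => ?_
  have h := torusFourierCoeff_torusChar (l i) l'
  rw [torusFourierCoeff] at h
  simp only [mul_assoc (w i)]
  rw [integral_const_mul, h, mul_ite, mul_one, mul_zero]

lemma lpBlock_sum (κ : ℕ) (z : ℝ × ℝ) :
    lpBlock κ (fun z => ∑ i, w i * torusChar (l i) z) z
      = ∑ i, (dyadicAnnulus κ).indicator (fun l' => w i * torusChar l' z) (l i) := by
  have hterm : ∀ l', (dyadicAnnulus κ).indicator (fun l' =>
        torusFourierCoeff (fun z => ∑ i, w i * torusChar (l i) z) l' * torusChar l' z) l'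
      = ∑ i, if l' = l i then (dyadicAnnulus κ).indicator
          (fun l' => w i * torusChar l' z) (l i) else 0 := by
    intro l'
    by_cases h : l' ∈ dyadicAnnulus κ
    · rw [Set.indicator_of_mem h, torusFourierCoeff_sum, Finset.sum_mul]
      refine Finset.sum_congr rfl fun i _ => ?_
      split_ifs with hi
      · subst hi; rw [Set.indicator_of_mem h]
      · rw [zero_mul]
    · rw [Set.indicator_of_notMem h]
      refine (Finset.sum_eq_zero fun i _ => ?_).symm
      split_ifs with hi
      · subst hi; exact Set.indicator_of_notMem h _
      · rfl
  change ∑' l', (dyadicAnnulus κ).indicator (fun l' =>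
      torusFourierCoeff (fun z => ∑ i, w i * torusChar (l i) z) l' * torusChar l' z) l' = _
  rw [tsum_congr hterm, Summable.tsum_finsetSum fun i _ => (hasSum_ite_eq (l i) _).summable]
  simp only [tsum_ite_eq]

lemma besovNegNorm_sum_le_of_four_pow_le {α : ℝ} (hα : 0 ≤ α) (m : ℕ)
    (hl : ∀ i, 4 ^ m ≤ (l i).1 ^ 2 + (l i).2 ^ 2) :
    besovNegNorm α (fun z => ∑ i, w i * torusChar (l i) z) ≤ 2 ^ (-α * m) * ∑ i, ‖w i‖ := by
  have hlow : ∀ κ ≤ m, ∀ z, lpBlock κ (fun z => ∑ i, w i * torusChar (l i) z) z = 0 := by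
    intro κ hκ z
    rw [lpBlock_sum]
    refine Finset.sum_eq_zero fun i _ => Set.indicator_of_notMem (fun hi => ?_) _
    have hlt := sq_add_sq_lt_of_mem_dyadicAnnulus hi
    have hpow : (4 : ℤ) ^ κ ≤ 4 ^ m := pow_le_pow_right₀ (by norm_num) hκ
    linarith [hl i]
  have hblock : ∀ κ z, ‖lpBlock κ (fun z => ∑ i, w i * torusChar (l i) z) z‖ ≤ ∑ i, ‖w i‖ := by
    intro κ z
    rw [lpBlock_sum]
    refine (norm_sum_le _ _).trans (Finset.sum_le_sum fun i _ => ?_)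
    refine (norm_indicator_le_norm_self _ _).trans_eq ?_
    rw [norm_mul, norm_torusChar, mul_one]
  refine Real.iSup_le (fun κ => ?_) (by positivity)
  rcases le_or_gt κ m with hκ | hκ
  · simp only [hlow κ hκ, norm_zero, Real.iSup_const_zero, mul_zero]
    positivity
  · have hκ' : (m : ℝ) ≤ κ - 1 := by
      rw [le_sub_iff_add_le]; exact_mod_cast hκ
    exact mul_le_mul (Real.rpow_le_rpow_of_exponent_le one_le_two (by nlinarith))
      (Real.iSup_le (hblock κ) (by positivity)) (Real.iSup_nonneg fun _ => norm_nonneg _)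
      (by positivity)

end TrigPoly

lemma four_pow_le_zsmul_diag {k : ℤ} (hk : k ≠ 0) (m : ℕ) :
    4 ^ m ≤ (k • ((2 : ℤ) ^ m, (2 : ℤ) ^ m)).1 ^ 2 + (k • ((2 : ℤ) ^ m, (2 : ℤ) ^ m)).2 ^ 2 := by
  have hk2 : 1 ≤ k ^ 2 := by nlinarith [sq_pos_of_ne_zero hk, sq_nonneg k]
  have h4 : ((2 : ℤ) ^ m) ^ 2 = 4 ^ m := by rw [← pow_mul, mul_comm, pow_mul]; norm_num
  simp only [Prod.smul_fst, Prod.smul_snd, smul_eq_mul, mul_pow, h4]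
  nlinarith [pow_pos (by norm_num : (0 : ℤ) < 4) m]

lemma besovNegNorm_sum_zpow_le {ι : Type*} [Fintype ι] {α : ℝ} (hα : 0 ≤ α) (m : ℕ)
    (w : ι → ℂ) (k : ι → ℤ) (hk : ∀ i, k i ≠ 0) :
    besovNegNorm α (fun z => ∑ i, w i * torusChar ((2 : ℤ) ^ m, (2 : ℤ) ^ m) z ^ k i)
      ≤ 2 ^ (-α * m) * ∑ i, ‖w i‖ := by
  simp_rw [← torusChar_zsmul]
  exact besovNegNorm_sum_le_of_four_pow_le w _ hα m fun i => four_pow_le_zsmul_diag (hk i) m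

section Hermite

variable {α : ℝ} (m : ℕ) (c : ℂ)

lemma besovNegNorm_cos_le (hα : 0 ≤ α) :
    besovNegNorm α (fun z => c * (torusChar ((2 : ℤ) ^ m, (2 : ℤ) ^ m) z
      + (torusChar ((2 : ℤ) ^ m, (2 : ℤ) ^ m) z)⁻¹)) ≤ 2 ^ (-α * m) * (2 * ‖c‖) := by
  have h := besovNegNorm_sum_zpow_le hα m ![c, c] ![1, -1] (by decide)
  simpa [Fin.sum_univ_two, mul_add, two_mul] using h

lemma besovNegNorm_cos_sq_sub_le (hα : 0 ≤ α) :
    besovNegNorm α (fun z => (c * (torusChar ((2 : ℤ) ^ m, (2 : ℤ) ^ m) z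
      + (torusChar ((2 : ℤ) ^ m, (2 : ℤ) ^ m) z)⁻¹)) ^ 2 - 2 * c ^ 2)
      ≤ 2 ^ (-α * m) * (2 * ‖c‖ ^ 2) := by
  have h := besovNegNorm_sum_zpow_le hα m ![c ^ 2, c ^ 2] ![2, -2] (by decide)
  simp only [Fin.sum_univ_two, Matrix.cons_val_zero, Matrix.cons_val_one, norm_pow, zpow_neg,
    zpow_ofNat] at h
  convert h using 3 with z
  · have hv : torusChar ((2 : ℤ) ^ m, (2 : ℤ) ^ m) z ≠ 0 := exp_ne_zero _
    field_simp
    ring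
  · ring

lemma besovNegNorm_cos_cube_sub_le (hα : 0 ≤ α) :
    besovNegNorm α (fun z => (c * (torusChar ((2 : ℤ) ^ m, (2 : ℤ) ^ m) z
      + (torusChar ((2 : ℤ) ^ m, (2 : ℤ) ^ m) z)⁻¹)) ^ 3
      - 3 * (2 * c ^ 2) * (c * (torusChar ((2 : ℤ) ^ m, (2 : ℤ) ^ m) z
      + (torusChar ((2 : ℤ) ^ m, (2 : ℤ) ^ m) z)⁻¹)))
      ≤ 2 ^ (-α * m) * (8 * ‖c‖ ^ 3) := by
  have h := besovNegNorm_sum_zpow_le hα m ![c ^ 3, c ^ 3, -3 * c ^ 3, -3 * c ^ 3]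
    ![3, -3, 1, -1] (by decide)
  simp only [Fin.sum_univ_four, Matrix.cons_val_zero, Matrix.cons_val_one, Matrix.cons_val,
    zpow_ofNat, zpow_neg, pow_one, norm_pow, norm_neg, Complex.norm_mul, Complex.norm_ofNat] at h
  convert h using 3 with z
  · have hv : torusChar ((2 : ℤ) ^ m, (2 : ℤ) ^ m) z ≠ 0 := exp_ne_zero _
    field_simp
    ring
  · ring

end Hermite

lemma tendsto_rpow_mul_two_rpow_neg_of_le_linear {α C p : ℝ} (hα : 0 < α) (hp : 0 ≤ p)
    {a : ℕ → ℝ} (ha0 : ∀ m, 0 ≤ a m) (ha : ∀ m, a m ≤ C * (m + 1)) :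
    Tendsto (fun m : ℕ => a m ^ p * 2 ^ (-α * m)) atTop (nhds 0) := by
  have hC : 0 ≤ C := by simpa using (ha0 0).trans (ha 0)
  have hlim : Tendsto (fun x : ℝ => x ^ p * 2 ^ (-α * x)) atTop (nhds 0) := by
    refine (tendsto_rpow_mul_exp_neg_mul_atTop_nhds_zero p (α * Real.log 2)
      (by positivity)).congr fun x => ?_
    rw [Real.rpow_def_of_pos two_pos]
    ring_nf
  have hshift := (hlim.comp (tendsto_atTop_add_const_right _ 1
    tendsto_natCast_atTop_atTop)).const_mul (C ^ p * 2 ^ α)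
  rw [mul_zero] at hshift
  refine squeeze_zero (fun m => by have := ha0 m; positivity) (fun m => ?_) hshift
  have hpow : (2 : ℝ) ^ (-α * m) = 2 ^ α * 2 ^ (-α * (m + 1)) := by
    rw [← Real.rpow_add two_pos]; ring_nf
  calc a m ^ p * 2 ^ (-α * m) ≤ (C * (m + 1)) ^ p * 2 ^ (-α * m) := by
        gcongr; exacts [ha0 m, ha m]
    _ = _ := by
        rw [Real.mul_rpow hC (by positivity), hpow, Function.comp_apply]; ring

lemma besovNegNorm_hermite_le {α : ℝ} (hα : 0 ≤ α) {K : ℝ} (hK : 0 ≤ K) (m : ℕ)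
    (g : ℝ × ℝ → ℂ)
    (hg : ∀ z, g z = (√K / √2 : ℝ) *
      (exp (2 * π * I * ((2 : ℂ) ^ m * z.1 + (2 : ℂ) ^ m * z.2)) +
       exp (-(2 * π * I * ((2 : ℂ) ^ m * z.1 + (2 : ℂ) ^ m * z.2))))) :
    besovNegNorm α g ≤ 4 * √K * 2 ^ (-α * m) ∧
    besovNegNorm α (fun z => g z ^ 2 - (K : ℂ)) ≤ 4 * K * 2 ^ (-α * m) ∧
    besovNegNorm α (fun z => g z ^ 3 - 3 * (K : ℂ) * g z)
      ≤ 4 * K ^ ((3 : ℝ) / 2) * 2 ^ (-α * m) := by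
  set s := √K
  set c : ℝ := s / √2
  have hs : 0 ≤ s := Real.sqrt_nonneg _
  have hs2 : s ^ 2 = K := Real.sq_sqrt hK
  have hcs : c ≤ s := div_le_self hs (Real.one_le_sqrt.mpr one_le_two)
  have hc2 : 2 * c ^ 2 = K := by rw [div_pow, Real.sq_sqrt zero_le_two, hs2]; ring
  have hK_eq : (K : ℂ) = 2 * (c : ℂ) ^ 2 := by rw [← hc2]; push_cast; ring
  have hg' : g = fun z => (c : ℂ) * (torusChar ((2 : ℤ) ^ m, (2 : ℤ) ^ m) z
      + (torusChar ((2 : ℤ) ^ m, (2 : ℤ) ^ m) z)⁻¹) := by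
    funext z
    rw [hg, torusChar_diag, Complex.exp_neg]
  have hK32 : K ^ ((3 : ℝ) / 2) = s ^ 3 := by
    rw [show s = K ^ ((1 : ℝ) / 2) from Real.sqrt_eq_rpow _, ← Real.rpow_natCast,
      ← Real.rpow_mul hK]
    norm_num
  have hnorm : ‖(c : ℂ)‖ = c := by rw [Complex.norm_real, Real.norm_of_nonneg (by positivity)]
  simp only [hg', hK_eq]
  refine ⟨(besovNegNorm_cos_le m _ hα).trans ?_,
    (besovNegNorm_cos_sq_sub_le m _ hα).trans ?_,
    (besovNegNorm_cos_cube_sub_le m _ hα).trans ?_⟩ <;>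
    refine (mul_comm _ _).trans_le (mul_le_mul_of_nonneg_right ?_ (by positivity)) <;>
    rw [hnorm]
  · linarith
  · nlinarith
  · rw [hK32]
    nlinarith [mul_le_mul_of_nonneg_left hcs (sq_nonneg s)]

theorem stmt_7_general (α : ℝ) (hα : α ∈ Set.Ioo (0:ℝ) 1) (C : ℝ)
    (Cm : ℕ → ℝ) (hCm0 : ∀ m, 0 ≤ Cm m) (hCmC : ∀ m, Cm m ≤ C * (m + 1))
    (f : ℕ → ℝ × ℝ → ℂ)
    (hf : ∀ m z, f m z = (Real.sqrt (Cm m) / Real.sqrt 2 : ℝ) *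
      (Complex.exp (2 * π * Complex.I * ((2:ℂ) ^ m * z.1 + (2:ℂ) ^ m * z.2)) +
       Complex.exp (-(2 * π * Complex.I * ((2:ℂ) ^ m * z.1 + (2:ℂ) ^ m * z.2))))) :
    (∃ C' > 0, ∀ m : ℕ,
       besovNegNorm α (f m) ≤ C' * Real.sqrt (Cm m) * 2 ^ (-α * m) ∧
       besovNegNorm α (fun z => f m z ^ 2 - (Cm m : ℂ)) ≤ C' * Cm m * 2 ^ (-α * m) ∧
       besovNegNorm α (fun z => f m z ^ 3 - 3 * (Cm m : ℂ) * f m z)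
         ≤ C' * Cm m ^ ((3:ℝ)/2) * 2 ^ (-α * m)) ∧
    Tendsto (fun m => besovNegNorm α (f m)) atTop (nhds 0) ∧
    Tendsto (fun m => besovNegNorm α (fun z => f m z ^ 2 - (Cm m : ℂ))) atTop (nhds 0) ∧
    Tendsto (fun m => besovNegNorm α (fun z => f m z ^ 3 - 3 * (Cm m : ℂ) * f m z))
      atTop (nhds 0) := by
  obtain ⟨hα0, -⟩ := hα
  have bounds := fun m => besovNegNorm_hermite_le hα0.le (hCm0 m) m (f m) (hf m)
  have decay : ∀ p : ℝ, 0 ≤ p →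
      Tendsto (fun m : ℕ => 4 * Cm m ^ p * 2 ^ (-α * m)) atTop (nhds 0) := fun p hp => by
      simpa only [mul_assoc, mul_zero] using
        (tendsto_rpow_mul_two_rpow_neg_of_le_linear hα0 hp hCm0 hCmC).const_mul 4
  refine ⟨⟨4, by norm_num, bounds⟩, ?_, ?_, ?_⟩
  · refine squeeze_zero (fun _ => besovNegNorm_nonneg _ _) (fun m => (bounds m).1) ?_
    simpa only [Real.sqrt_eq_rpow] using decay _ (by norm_num)
  · refine squeeze_zero (fun _ => besovNegNorm_nonneg _ _) (fun m => (bounds m).2.1) ?_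
    simpa only [Real.rpow_one] using decay 1 zero_le_one
  · exact squeeze_zero (fun _ => besovNegNorm_nonneg _ _) (fun m => (bounds m).2.2)
      (decay _ (by norm_num))

/-- If `C_m ≤ C(m+1)` then the first three Hermite polynomials of
`f_m = (C_m/2)^{1/2}(e_{2^m z₀} + e_{-2^m z₀})`, `z₀ = (1,1)`, tend to `0` in `𝒞^{-α}`,
with the quantitative bounds `‖f_m‖ ≲ C_m^{1/2} 2^{-αm}`, `‖f_m² − C_m‖ ≲ C_m 2^{-αm}`,
`‖f_m³ − 3C_m f_m‖ ≲ C_m^{3/2} 2^{-αm}`. -/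
theorem stmt_7 (α : ℝ) (hα : α ∈ Set.Ioo (0:ℝ) 1) (C : ℝ) (hC : 0 < C)
    (Cm : ℕ → ℝ) (hCm0 : ∀ m, 0 ≤ Cm m) (hCmC : ∀ m, Cm m ≤ C * (m + 1))
    (f : ℕ → ℝ × ℝ → ℂ)
    (hf : ∀ m z, f m z = (Real.sqrt (Cm m) / Real.sqrt 2 : ℝ) *
      (Complex.exp (2 * π * Complex.I * ((2:ℂ) ^ m * z.1 + (2:ℂ) ^ m * z.2)) +
       Complex.exp (-(2 * π * Complex.I * ((2:ℂ) ^ m * z.1 + (2:ℂ) ^ m * z.2))))) :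
    (∃ C' > 0, ∀ m : ℕ,
       besovNegNorm α (f m) ≤ C' * Real.sqrt (Cm m) * 2 ^ (-α * m) ∧
       besovNegNorm α (fun z => f m z ^ 2 - (Cm m : ℂ)) ≤ C' * Cm m * 2 ^ (-α * m) ∧
       besovNegNorm α (fun z => f m z ^ 3 - 3 * (Cm m : ℂ) * f m z)
         ≤ C' * Cm m ^ ((3:ℝ)/2) * 2 ^ (-α * m)) ∧
    Tendsto (fun m => besovNegNorm α (f m)) atTop (nhds 0) ∧
    Tendsto (fun m => besovNegNorm α (fun z => f m z ^ 2 - (Cm m : ℂ))) atTop (nhds 0) ∧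
    Tendsto (fun m => besovNegNorm α (fun z => f m z ^ 3 - 3 * (Cm m : ℂ) * f m z))
      atTop (nhds 0) :=
  stmt_7_general α hα C Cm hCm0 hCmC f hf
end
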